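/- Define Σ_0 = λ_p I + Σ_{i=1}^k (λ_i − λ_p) ξ_i ξ_i^T and assume λ_{k+1} − λ_p ≤ ε for some ε ≥ 0. Then the spectral norm of Σ_0^{-1} Σ satisfies ||Σ_0^{-1} Σ|| ≤ (λ_p + ε)/λ_p; consequently, for every δ ∈ R^p, ||Σ_0^{-1} δ||_2 ≤ ((λ_p + ε)/λ_p) ||Σ^{-1} δ||_2. (Intermediate claim in the proof of Theorem 2) -/

import Mathlib

open Matrix
open scoped Matrix.Norms.L2Operator

/-- Intermediate claim in the proof of Theorem 2: with
`Σ₀ = λ_p I + ∑_{i=1}^k (λ_i − λ_p) ξ_i ξ_iᵀ` and `λ_{k+1} − λ_p ≤ ε`, the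
spectral norm of `Σ₀⁻¹ Σ` is at most `(λ_p + ε)/λ_p`; consequently, for every
`δ`, `‖Σ₀⁻¹ δ‖₂ ≤ ((λ_p + ε)/λ_p)·‖Σ⁻¹ δ‖₂`. -/
theorem sigma0_inv_sigma_norm_bound
    {p k : ℕ} (hk : 1 ≤ k) (hkp : k < p)
    (S : Matrix (Fin p) (Fin p) ℝ) (hS : S.IsSymm)
    (lam : Fin p → ℝ) (xi : Fin p → (Fin p → ℝ))
    (hpos : ∀ j, 0 < lam j)
    (hdesc : ∀ i j : Fin p, i ≤ j → lam j ≤ lam i)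
    (horth : ∀ i j : Fin p, xi i ⬝ᵥ xi j = if i = j then (1 : ℝ) else 0)
    (heig : ∀ j, S.mulVec (xi j) = lam j • xi j)
    (S0 : Matrix (Fin p) (Fin p) ℝ)
    (hS0 : S0 = lam ⟨p - 1, by omega⟩ • (1 : Matrix (Fin p) (Fin p) ℝ) +
      ∑ i : Fin k, (lam ⟨i.1, by omega⟩ - lam ⟨p - 1, by omega⟩) •
        vecMulVec (xi ⟨i.1, by omega⟩) (xi ⟨i.1, by omega⟩))
    (ε : ℝ) (hε : 0 ≤ ε)
    (hquasi : lam ⟨k, hkp⟩ - lam ⟨p - 1, by omega⟩ ≤ ε) :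
    ‖S0⁻¹ * S‖ ≤ (lam ⟨p - 1, by omega⟩ + ε) / lam ⟨p - 1, by omega⟩ ∧
    ∀ δ : Fin p → ℝ,
      Real.sqrt (∑ i, (S0⁻¹.mulVec δ i) ^ 2) ≤
        (lam ⟨p - 1, by omega⟩ + ε) / lam ⟨p - 1, by omega⟩ *
          Real.sqrt (∑ i, (S⁻¹.mulVec δ i) ^ 2) := by
  classical
  have hq : p - 1 < p := by omega
  set q : Fin p := ⟨p - 1, hq⟩ with hqdef
  set C : ℝ := (lam q + ε) / lam q with hCdef
  have hlp : 0 < lam q := hpos q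
  have hC1 : 1 ≤ C := by
    rw [hCdef, le_div_iff₀ hlp, one_mul]
    linarith
  have hC0 : 0 ≤ C := le_trans zero_le_one hC1
  -- the modified eigenvalues
  set d0 : Fin p → ℝ := fun j => if (j : ℕ) < k then lam j else lam q with hd0def
  have hd0pos : ∀ j, 0 < d0 j := by
    intro j; rw [hd0def]; dsimp only; split <;> exact hpos _
  set μ : Fin p → ℝ := fun j => (d0 j)⁻¹ * lam j with hμdef
  have hμ0 : ∀ j, 0 ≤ μ j := fun j => le_of_lt (mul_pos (inv_pos.2 (hd0pos j)) (hpos j))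
  have hμC : ∀ j, μ j ≤ C := by
    intro j
    rw [hμdef]; dsimp only
    rw [hd0def]; dsimp only
    by_cases hj : (j : ℕ) < k
    · rw [if_pos hj, inv_mul_cancel₀ (ne_of_gt (hpos j))]; exact hC1
    · rw [if_neg hj]
      have h1 : lam j ≤ lam ⟨k, hkp⟩ := by
        apply hdesc
        exact Fin.mk_le_mk.mpr (le_of_not_gt hj) |>.trans_eq rfl |>.trans (le_refl _) |>.trans (le_refl _) |>.trans (le_refl _) |>.trans (le_refl _)
      have h2 : lam j ≤ lam q + ε := by linarith
      rw [hCdef, inv_mul_eq_div, div_le_div_iff₀ hlp hlp]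
      nlinarith
  -- the orthogonal matrix of eigenvectors
  set U : Matrix (Fin p) (Fin p) ℝ := Matrix.of (fun i j => xi j i) with hUdef
  have hUtU : Uᵀ * U = 1 := by
    ext i j
    have := horth i j
    simp only [dotProduct] at this
    simp [Matrix.mul_apply, hUdef, Matrix.one_apply, this]
  have hUUt : U * Uᵀ = 1 := mul_eq_one_comm.mp hUtU
  -- conjugation lemma
  have hconj : ∀ (A : Matrix (Fin p) (Fin p) ℝ) (f : Fin p → ℝ),
      (∀ j, A.mulVec (xi j) = f j • xi j) → A = U * Matrix.diagonal f * Uᵀ := by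
    intro A f hA
    have h1 : A * U = U * Matrix.diagonal f := by
      ext i j
      have := congrFun (hA j) i
      simp only [Matrix.mulVec, dotProduct, Pi.smul_apply, smul_eq_mul] at this
      rw [Matrix.mul_apply, Matrix.mul_diagonal]
      simp only [hUdef, Matrix.of_apply]
      rw [this, mul_comm]
    calc A = A * (U * Uᵀ) := by rw [hUUt, mul_one]
      _ = (A * U) * Uᵀ := by rw [Matrix.mul_assoc]
      _ = U * Matrix.diagonal f * Uᵀ := by rw [h1]
  -- S0 action on eigenvectors
  have hS0mv : ∀ j, S0.mulVec (xi j) = d0 j • xi j := by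
    intro j
    have hsum : (∑ i : Fin k, (lam ⟨i.1, by omega⟩ - lam ⟨p - 1, by omega⟩) •
        vecMulVec (xi ⟨i.1, by omega⟩) (xi ⟨i.1, by omega⟩)) *ᵥ xi j
        = ∑ i : Fin k, ((lam ⟨i.1, by omega⟩ - lam q) •
            vecMulVec (xi ⟨i.1, by omega⟩) (xi ⟨i.1, by omega⟩)) *ᵥ xi j := by
      funext m
      simp [Matrix.mulVec, dotProduct, Matrix.sum_apply, Matrix.smul_apply,
        Finset.sum_mul, smul_eq_mul]
      rw [Finset.sum_comm]
    have hterm : ∀ i : Fin k,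
        ((lam ⟨i.1, by omega⟩ - lam q) • vecMulVec (xi ⟨i.1, by omega⟩)
          (xi ⟨i.1, by omega⟩)) *ᵥ xi j
        = (lam ⟨i.1, by omega⟩ - lam q) • ((xi ⟨i.1, by omega⟩ ⬝ᵥ xi j) • xi ⟨i.1, by omega⟩) := by
      intro i
      rw [Matrix.smul_mulVec]
      congr 1
      funext m
      simp only [Matrix.mulVec, dotProduct, Matrix.vecMulVec_apply, Pi.smul_apply,
        smul_eq_mul, mul_assoc]
      rw [← Finset.mul_sum, mul_comm]
    rw [hS0, Matrix.add_mulVec, Matrix.smul_mulVec, Matrix.one_mulVec, hsum]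
    simp only [hterm, horth]
    by_cases hj : (j : ℕ) < k
    · rw [Finset.sum_eq_single ⟨j.1, hj⟩]
      · have hjeq : (⟨(⟨j.1, hj⟩ : Fin k).1, by omega⟩ : Fin p) = j := by
          apply Fin.ext; rfl
        rw [if_pos hjeq, hjeq, one_smul, ← add_smul]
        rw [hd0def]; dsimp only
        rw [if_pos hj]
        congr 1
        ring
      · intro b _ hb
        have : (⟨b.1, by omega⟩ : Fin p) ≠ j := by
          intro hcon
          apply hb
          apply Fin.ext
          simpa using congrArg Fin.val hcon
        rw [if_neg this]
        simp
      · simp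
    · have hzero : ∀ i : Fin k, i ∈ Finset.univ →
          (lam ⟨i.1, by omega⟩ - lam q) •
            ((if (⟨i.1, by omega⟩ : Fin p) = j then (1:ℝ) else 0) • xi ⟨i.1, by omega⟩) = 0 := by
        intro i _
        have : (⟨i.1, by omega⟩ : Fin p) ≠ j := by
          intro hcon
          apply hj
          have := congrArg Fin.val hcon
          simp at this
          omega
        rw [if_neg this]
        simp
      rw [Finset.sum_eq_zero hzero, add_zero]
      rw [hd0def]; dsimp only
      rw [if_neg hj]
  -- diagonalizations
  have hSd : S = U * Matrix.diagonal lam * Uᵀ := hconj S lam heig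
  have hS0d : S0 = U * Matrix.diagonal d0 * Uᵀ := hconj S0 d0 hS0mv
  have hprod : ∀ f g : Fin p → ℝ,
      (U * Matrix.diagonal f * Uᵀ) * (U * Matrix.diagonal g * Uᵀ)
        = U * Matrix.diagonal (fun j => f j * g j) * Uᵀ := by
    intro f g
    have : Uᵀ * (U * Matrix.diagonal g * Uᵀ) = Matrix.diagonal g * Uᵀ := by
      rw [← Matrix.mul_assoc, ← Matrix.mul_assoc, hUtU, Matrix.one_mul]
    rw [Matrix.mul_assoc (U * Matrix.diagonal f), this, Matrix.mul_assoc U,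
      ← Matrix.mul_assoc (Matrix.diagonal f), Matrix.diagonal_mul_diagonal,
      ← Matrix.mul_assoc, Matrix.mul_assoc U]
  have hS0inv : S0⁻¹ = U * Matrix.diagonal (fun j => (d0 j)⁻¹) * Uᵀ := by
    apply Matrix.inv_eq_left_inv
    rw [hS0d, hprod]
    have : (fun j => (d0 j)⁻¹ * d0 j) = fun _ => (1:ℝ) := by
      funext j; exact inv_mul_cancel₀ (ne_of_gt (hd0pos j))
    rw [this, Matrix.diagonal_one, Matrix.mul_one, hUUt]
  have hSinv : S⁻¹ = U * Matrix.diagonal (fun j => (lam j)⁻¹) * Uᵀ := by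
    apply Matrix.inv_eq_left_inv
    rw [hSd, hprod]
    have : (fun j => (lam j)⁻¹ * lam j) = fun _ => (1:ℝ) := by
      funext j; exact inv_mul_cancel₀ (ne_of_gt (hpos j))
    rw [this, Matrix.diagonal_one, Matrix.mul_one, hUUt]
  have hM : S0⁻¹ * S = U * Matrix.diagonal μ * Uᵀ := by
    rw [hS0inv, hSd, hprod]
  have hMS : (S0⁻¹ * S) * S⁻¹ = S0⁻¹ := by
    rw [hM, hSinv, hprod, hS0inv]
    have hfun : (fun j => μ j * (lam j)⁻¹) = fun j => (d0 j)⁻¹ := by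
      funext j
      rw [hμdef]; dsimp only
      rw [mul_assoc, mul_inv_cancel₀ (ne_of_gt (hpos j)), mul_one]
    rw [hfun]
  -- isometry of orthogonal matrices
  have hiso : ∀ (V : Matrix (Fin p) (Fin p) ℝ), Vᵀ * V = 1 →
      ∀ y : Fin p → ℝ, (V *ᵥ y) ⬝ᵥ (V *ᵥ y) = y ⬝ᵥ y := by
    intro V hV y
    rw [Matrix.dotProduct_mulVec, ← Matrix.mulVec_transpose, Matrix.mulVec_mulVec, hV,
      Matrix.one_mulVec]
  have hsq : ∀ v : Fin p → ℝ, v ⬝ᵥ v = ∑ i, (v i) ^ 2 := by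
    intro v; simp [dotProduct, sq]
  -- pointwise quadratic bound
  have hquad : ∀ x : Fin p → ℝ,
      ∑ i, (((S0⁻¹ * S) *ᵥ x) i) ^ 2 ≤ C ^ 2 * ∑ i, (x i) ^ 2 := by
    intro x
    have hUtUt : (Uᵀ)ᵀ * Uᵀ = 1 := by rw [Matrix.transpose_transpose, hUUt]
    have hx : (S0⁻¹ * S) *ᵥ x = U *ᵥ (Matrix.diagonal μ *ᵥ (Uᵀ *ᵥ x)) := by
      rw [Matrix.mulVec_mulVec, Matrix.mulVec_mulVec, ← hM]
    set z : Fin p → ℝ := Uᵀ *ᵥ x with hz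
    calc ∑ i, (((S0⁻¹ * S) *ᵥ x) i) ^ 2
        = (U *ᵥ (Matrix.diagonal μ *ᵥ z)) ⬝ᵥ (U *ᵥ (Matrix.diagonal μ *ᵥ z)) := by
          rw [hx, hsq]
      _ = (Matrix.diagonal μ *ᵥ z) ⬝ᵥ (Matrix.diagonal μ *ᵥ z) := hiso U hUtU _
      _ = ∑ i, (μ i * z i) ^ 2 := by
          rw [hsq]; exact Finset.sum_congr rfl fun i _ => by rw [Matrix.mulVec_diagonal]
      _ ≤ ∑ i, C ^ 2 * (z i) ^ 2 := by
          apply Finset.sum_le_sum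
          intro i _
          rw [mul_pow]
          apply mul_le_mul_of_nonneg_right _ (sq_nonneg _)
          exact pow_le_pow_left₀ (hμ0 i) (hμC i) 2
      _ = C ^ 2 * ∑ i, (z i) ^ 2 := by rw [Finset.mul_sum]
      _ = C ^ 2 * ∑ i, (x i) ^ 2 := by
          congr 1
          rw [← hsq, ← hsq, hz]
          exact hiso Uᵀ hUtUt x
  -- translate Euclidean norms
  have hnormeq : ∀ v : Fin p → ℝ,
      ‖(EuclideanSpace.equiv (Fin p) ℝ).symm v‖ = Real.sqrt (∑ i, (v i) ^ 2) := by
    intro v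
    rw [EuclideanSpace.norm_eq]
    congr 1
    exact Finset.sum_congr rfl fun i _ => by
      rw [Real.norm_eq_abs, sq_abs]; rfl
  -- the operator norm bound
  have hnorm : ‖S0⁻¹ * S‖ ≤ C := by
    rw [Matrix.l2_opNorm_def]
    apply ContinuousLinearMap.opNorm_le_bound _ hC0
    intro x
    have h1 : ((Matrix.toEuclideanLin.trans LinearMap.toContinuousLinearMap) (S0⁻¹ * S)) x
        = (EuclideanSpace.equiv (Fin p) ℝ).symm ((S0⁻¹ * S) *ᵥ (WithLp.equiv 2 _ x)) := rfl
    rw [h1, hnormeq]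
    have h2 : ‖x‖ = Real.sqrt (∑ i, ((WithLp.equiv 2 (Fin p → ℝ) x) i) ^ 2) := by
      rw [EuclideanSpace.norm_eq]
      congr 1
      exact Finset.sum_congr rfl fun i _ => by rw [Real.norm_eq_abs, sq_abs]; rfl
    rw [h2]
    set y : Fin p → ℝ := WithLp.equiv 2 (Fin p → ℝ) x
    calc Real.sqrt (∑ i, (((S0⁻¹ * S) *ᵥ y) i) ^ 2)
        ≤ Real.sqrt (C ^ 2 * ∑ i, (y i) ^ 2) := Real.sqrt_le_sqrt (hquad y)
      _ = C * Real.sqrt (∑ i, (y i) ^ 2) := by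
          rw [Real.sqrt_mul (sq_nonneg C), Real.sqrt_sq hC0]
  refine ⟨hnorm, ?_⟩
  intro δ
  have h2 : S0⁻¹ *ᵥ δ = (S0⁻¹ * S) *ᵥ (S⁻¹ *ᵥ δ) := by
    rw [Matrix.mulVec_mulVec, hMS]
  set w : Fin p → ℝ := S⁻¹ *ᵥ δ with hw
  have key := Matrix.l2_opNorm_mulVec (S0⁻¹ * S) ((EuclideanSpace.equiv (Fin p) ℝ).symm w)
  have e1 : (S0⁻¹ * S) *ᵥ ((EuclideanSpace.equiv (Fin p) ℝ).symm w : EuclideanSpace ℝ (Fin p))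
      = S0⁻¹ *ᵥ δ := by
    exact h2.symm
  rw [e1, hnormeq, hnormeq] at key
  calc Real.sqrt (∑ i, (S0⁻¹.mulVec δ i) ^ 2) ≤ ‖S0⁻¹ * S‖ * Real.sqrt (∑ i, (w i) ^ 2) := key
    _ ≤ C * Real.sqrt (∑ i, (w i) ^ 2) := by
        apply mul_le_mul_of_nonneg_right hnorm (Real.sqrt_nonneg _)
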